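/- Short-maturity at-the-money implied volatility skew of the fractional Bergomi model, non-rough case: let H ∈ [1/2, 1), v > 0, σ₀ > 0 and ρ ∈ [−1,1], and define F(T) = (ρ/(σ₀ T²)) ∫₀^T ∫_r^T (σ₀ v √(2H)/2) e^{−v² u^{2H}/8} (u−r)^{H−1/2} du dr for T > 0. Then lim_{T → 0⁺} F(T) = ρv/4 if H = 1/2, and lim_{T → 0⁺} F(T) = 0 if H > 1/2. -/

import Mathlib

open Real MeasureTheory Set Filter

lemma myrpow_eval (p : ℝ) (hp : 0 ≤ p) (r T : ℝ) :
    ∫ u in r..T, (u - r) ^ p = (T - r) ^ (p + 1) / (p + 1) := by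
  rw [show (∫ u in r..T, (u - r) ^ p) = ∫ u in (r - r)..(T - r), u ^ p from
    intervalIntegral.integral_comp_sub_right (fun x => x ^ p) r]
  rw [sub_self, integral_rpow (Or.inl (by linarith)),
    Real.zero_rpow (by positivity), sub_zero]

lemma myrpow_eval' (q : ℝ) (hq : 0 ≤ q) (T : ℝ) :
    ∫ r in (0:ℝ)..T, (T - r) ^ q = T ^ (q + 1) / (q + 1) := by
  rw [show (∫ r in (0:ℝ)..T, (T - r) ^ q) = ∫ x in (T - T)..(T - 0), x ^ q from
    intervalIntegral.integral_comp_sub_left (fun x => x ^ q) T]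
  rw [sub_self, sub_zero, integral_rpow (Or.inl (by linarith)),
    Real.zero_rpow (by positivity), sub_zero]

lemma myContF (H v σ₀ : ℝ) (hH : 1/2 ≤ H) :
    Continuous (Function.uncurry fun r u : ℝ =>
      (σ₀ * v * Real.sqrt (2 * H) / 2) * Real.exp (-(v ^ 2 * u ^ (2 * H)) / 8)
        * (u - r) ^ (H - 1 / 2)) := by
  have h1 : (0:ℝ) ≤ 2 * H := by linarith
  have h2 : (0:ℝ) ≤ H - 1/2 := by linarith
  show Continuous fun q : ℝ × ℝ => _
  apply Continuous.mul
  · apply continuous_const.mul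
    exact Real.continuous_exp.comp
      (((continuous_const.mul ((Real.continuous_rpow_const h1).comp continuous_snd)).neg).div_const 8)
  · exact (Real.continuous_rpow_const h2).comp (continuous_snd.sub continuous_fst)

lemma myGbounds (H v σ₀ : ℝ) (hH : 1/2 ≤ H) (hv : 0 < v) (hσ₀ : 0 < σ₀)
    {T : ℝ} (hT : 0 < T) :
    Real.exp (-(v ^ 2 * T ^ (2 * H)) / 8) *
        (v * Real.sqrt (2 * H) / (2 * (H - 1/2 + 1) * (H - 1/2 + 2)) * T ^ (H - 1/2))
      ≤ (∫ r in (0:ℝ)..T, ∫ u in r..T,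
          (σ₀ * v * Real.sqrt (2 * H) / 2) * Real.exp (-(v ^ 2 * u ^ (2 * H)) / 8)
            * (u - r) ^ (H - 1 / 2)) / (σ₀ * T ^ 2)
    ∧ (∫ r in (0:ℝ)..T, ∫ u in r..T,
          (σ₀ * v * Real.sqrt (2 * H) / 2) * Real.exp (-(v ^ 2 * u ^ (2 * H)) / 8)
            * (u - r) ^ (H - 1 / 2)) / (σ₀ * T ^ 2)
      ≤ v * Real.sqrt (2 * H) / (2 * (H - 1/2 + 1) * (H - 1/2 + 2)) * T ^ (H - 1/2) := by
  set p : ℝ := H - 1/2 with hp_def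
  have hp : 0 ≤ p := by simp [hp_def]; linarith
  have h2H : (0:ℝ) < 2 * H := by linarith
  set F : ℝ → ℝ → ℝ := fun r u =>
    (σ₀ * v * Real.sqrt (2 * H) / 2) * Real.exp (-(v ^ 2 * u ^ (2 * H)) / 8)
      * (u - r) ^ (H - 1 / 2) with hF_def
  have hCont : Continuous (Function.uncurry F) := myContF H v σ₀ hH
  set C : ℝ := σ₀ * v * Real.sqrt (2 * H) / 2 with hC_def
  have hC : 0 < C := by
    have := Real.sqrt_pos.mpr h2H
    positivity
  set E : ℝ := Real.exp (-(v ^ 2 * T ^ (2 * H)) / 8) with hE_def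
  have hE0 : 0 < E := Real.exp_pos _
  have hE1 : E ≤ 1 := by
    rw [hE_def, Real.exp_le_one_iff]
    have : 0 ≤ T ^ (2 * H) := Real.rpow_nonneg hT.le _
    nlinarith [sq_nonneg v]
  -- pointwise bound on the exponential for u ∈ [0, T]
  have hExp : ∀ u : ℝ, 0 ≤ u → u ≤ T →
      E ≤ Real.exp (-(v ^ 2 * u ^ (2 * H)) / 8) ∧
      Real.exp (-(v ^ 2 * u ^ (2 * H)) / 8) ≤ 1 := by
    intro u hu huT
    have h1 : u ^ (2 * H) ≤ T ^ (2 * H) := Real.rpow_le_rpow hu huT h2H.le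
    have h2 : 0 ≤ u ^ (2 * H) := Real.rpow_nonneg hu _
    constructor
    · rw [hE_def]
      apply Real.exp_le_exp.mpr
      nlinarith [sq_nonneg v]
    · rw [Real.exp_le_one_iff]
      nlinarith [sq_nonneg v]
  -- inner bounds
  have inner_int : ∀ r : ℝ, IntervalIntegrable (F r) volume r T :=
    fun r => (hCont.uncurry_left r).intervalIntegrable r T
  have inner_upper : ∀ r ∈ Icc (0:ℝ) T,
      (∫ u in r..T, F r u) ≤ C * ((T - r) ^ (p + 1) / (p + 1)) := by
    intro r hr
    have hle : (∫ u in r..T, F r u) ≤ ∫ u in r..T, C * (u - r) ^ p := by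
      apply intervalIntegral.integral_mono_on hr.2 (inner_int r)
        ((continuous_const.mul ((Real.continuous_rpow_const hp).comp
          (continuous_id.sub continuous_const))).intervalIntegrable r T)
      intro u hu
      have hX : 0 ≤ (u - r) ^ p := Real.rpow_nonneg (by linarith [hu.1]) _
      have hE' := (hExp u (le_trans hr.1 hu.1) hu.2).2
      calc F r u = (C * Real.exp (-(v ^ 2 * u ^ (2 * H)) / 8)) * (u - r) ^ p := by
            rw [hF_def]
        _ ≤ C * (u - r) ^ p := by
            apply mul_le_mul_of_nonneg_right _ hX
            exact mul_le_of_le_one_right hC.le hE'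
    rwa [intervalIntegral.integral_const_mul, myrpow_eval p hp] at hle
  have inner_lower : ∀ r ∈ Icc (0:ℝ) T,
      E * C * ((T - r) ^ (p + 1) / (p + 1)) ≤ ∫ u in r..T, F r u := by
    intro r hr
    have hle : (∫ u in r..T, (E * C) * (u - r) ^ p) ≤ ∫ u in r..T, F r u := by
      apply intervalIntegral.integral_mono_on hr.2
        ((continuous_const.mul ((Real.continuous_rpow_const hp).comp
          (continuous_id.sub continuous_const))).intervalIntegrable r T)
        (inner_int r)
      intro u hu
      have hX : 0 ≤ (u - r) ^ p := Real.rpow_nonneg (by linarith [hu.1]) _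
      have hE' := (hExp u (le_trans hr.1 hu.1) hu.2).1
      calc (E * C) * (u - r) ^ p ≤
          (C * Real.exp (-(v ^ 2 * u ^ (2 * H)) / 8)) * (u - r) ^ p := by
            apply mul_le_mul_of_nonneg_right _ hX
            calc E * C = C * E := by ring
              _ ≤ C * Real.exp (-(v ^ 2 * u ^ (2 * H)) / 8) :=
                mul_le_mul_of_nonneg_left hE' hC.le
        _ = F r u := by rw [hF_def]
    rwa [intervalIntegral.integral_const_mul, myrpow_eval p hp] at hle
  -- continuity of the inner integral as a function of r
  have hg : Continuous fun r => ∫ u in r..T, F r u := by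
    have h := (intervalIntegral.continuous_parametric_intervalIntegral_of_continuous
      (a₀ := T) (μ := volume) hCont continuous_id).neg
    have heq : (fun r => ∫ u in r..T, F r u) = fun r => -∫ u in T..r, F r u := by
      funext r; rw [intervalIntegral.integral_symm]
    rw [heq]; exact h
  have hbcont : Continuous fun r : ℝ => (T - r) ^ (p + 1) / (p + 1) :=
    ((Real.continuous_rpow_const (by linarith)).comp
      (continuous_const.sub continuous_id)).div_const _
  -- outer bounds
  have outer_upper : (∫ r in (0:ℝ)..T, ∫ u in r..T, F r u)
      ≤ C * (T ^ (p + 2) / ((p + 1) * (p + 2))) := by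
    have hle : (∫ r in (0:ℝ)..T, ∫ u in r..T, F r u)
        ≤ ∫ r in (0:ℝ)..T, C * ((T - r) ^ (p + 1) / (p + 1)) := by
      apply intervalIntegral.integral_mono_on hT.le (hg.intervalIntegrable 0 T)
        ((continuous_const.mul hbcont).intervalIntegrable 0 T) inner_upper
    rw [intervalIntegral.integral_const_mul] at hle
    have : (∫ r in (0:ℝ)..T, (T - r) ^ (p + 1) / (p + 1))
        = T ^ (p + 2) / ((p + 1) * (p + 2)) := by
      rw [intervalIntegral.integral_div, myrpow_eval' (p + 1) (by linarith) T]
      rw [show p + 1 + 1 = p + 2 by ring, div_div, mul_comm (p + 2) (p + 1)]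
    rwa [this] at hle
  have outer_lower : E * C * (T ^ (p + 2) / ((p + 1) * (p + 2)))
      ≤ ∫ r in (0:ℝ)..T, ∫ u in r..T, F r u := by
    have hle : (∫ r in (0:ℝ)..T, E * C * ((T - r) ^ (p + 1) / (p + 1)))
        ≤ ∫ r in (0:ℝ)..T, ∫ u in r..T, F r u := by
      apply intervalIntegral.integral_mono_on hT.le
        ((continuous_const.mul hbcont).intervalIntegrable 0 T)
        (hg.intervalIntegrable 0 T) inner_lower
    rw [intervalIntegral.integral_const_mul] at hle
    have : (∫ r in (0:ℝ)..T, (T - r) ^ (p + 1) / (p + 1))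
        = T ^ (p + 2) / ((p + 1) * (p + 2)) := by
      rw [intervalIntegral.integral_div, myrpow_eval' (p + 1) (by linarith) T]
      rw [show p + 1 + 1 = p + 2 by ring, div_div, mul_comm (p + 2) (p + 1)]
    rwa [this] at hle
  -- divide by σ₀ T²
  have hden : (0:ℝ) < σ₀ * T ^ 2 := by positivity
  have hTp : T ^ (p + 2) = T ^ p * T ^ 2 := by
    rw [Real.rpow_add hT, Real.rpow_two]
  have hp1 : (0:ℝ) < p + 1 := by linarith
  have hp2 : (0:ℝ) < p + 2 := by linarith
  have key : C * (T ^ (p + 2) / ((p + 1) * (p + 2))) / (σ₀ * T ^ 2)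
      = v * Real.sqrt (2 * H) / (2 * (p + 1) * (p + 2)) * T ^ p := by
    rw [hC_def, hTp]
    field_simp
  have hσ0' : σ₀ ≠ 0 := ne_of_gt hσ₀
  have hT' : T ≠ 0 := ne_of_gt hT
  have hp1' : p + 1 ≠ 0 := ne_of_gt hp1
  have hp2' : p + 2 ≠ 0 := ne_of_gt hp2
  constructor
  · have h1 := (div_le_div_iff_of_pos_right hden).mpr outer_lower
    have heq : E * C * (T ^ (p + 2) / ((p + 1) * (p + 2))) / (σ₀ * T ^ 2)
        = E * (v * Real.sqrt (2 * H) / (2 * (p + 1) * (p + 2)) * T ^ p) := by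
      rw [hTp, hC_def]; field_simp
    rw [heq] at h1; exact h1
  · have h1 := (div_le_div_iff_of_pos_right hden).mpr outer_upper
    rw [key] at h1; exact h1

lemma myHalfBounds (v σ₀ : ℝ) (hv : 0 < v) (hσ₀ : 0 < σ₀) {T : ℝ} (hT : 0 < T) :
    Real.exp (-(v ^ 2 * T) / 8) * (v / 4)
      ≤ (∫ r in (0:ℝ)..T, ∫ u in r..T,
          (σ₀ * v * Real.sqrt (2 * (1/2 : ℝ)) / 2)
            * Real.exp (-(v ^ 2 * u ^ (2 * (1/2 : ℝ))) / 8)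
            * (u - r) ^ ((1:ℝ)/2 - 1 / 2)) / (σ₀ * T ^ 2) ∧
    (∫ r in (0:ℝ)..T, ∫ u in r..T,
          (σ₀ * v * Real.sqrt (2 * (1/2 : ℝ)) / 2)
            * Real.exp (-(v ^ 2 * u ^ (2 * (1/2 : ℝ))) / 8)
            * (u - r) ^ ((1:ℝ)/2 - 1 / 2)) / (σ₀ * T ^ 2) ≤ v / 4 := by
  have h := myGbounds (1/2) v σ₀ le_rfl hv hσ₀ hT
  refine ⟨le_trans (le_of_eq ?_) h.1, le_trans h.2 (le_of_eq ?_)⟩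
  · norm_num [Real.sqrt_one, Real.rpow_one, Real.rpow_zero]
  · norm_num [Real.sqrt_one, Real.rpow_one, Real.rpow_zero]

/-- The at-the-money implied volatility skew functional of the fractional
Bergomi model:
`F(T) = (ρ/(σ₀ T²)) ∫₀^T ∫_r^T (σ₀ v √(2H)/2) e^{-v² u^{2H}/8} (u-r)^{H-1/2} du dr`. -/
noncomputable def skewF (H v σ₀ ρ T : ℝ) : ℝ :=
  (ρ / (σ₀ * T ^ 2)) *
    ∫ r in (0 : ℝ)..T, ∫ u in r..T,
      (σ₀ * v * Real.sqrt (2 * H) / 2) * Real.exp (-(v ^ 2 * u ^ (2 * H)) / 8)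
        * (u - r) ^ (H - 1 / 2)

/-- short-maturity ATM skew of the fractional Bergomi model,
non-rough case `H ≥ 1/2`. -/
theorem stmt_19 (H v σ₀ ρ : ℝ) (hH : H ∈ Set.Ico (1 / 2 : ℝ) 1)
    (hv : 0 < v) (hσ₀ : 0 < σ₀) (hρ : ρ ∈ Set.Icc (-1 : ℝ) 1) :
    (H = 1 / 2 →
      Filter.Tendsto (fun T : ℝ => skewF H v σ₀ ρ T)
        (nhdsWithin 0 (Set.Ioi 0)) (nhds (ρ * v / 4))) ∧
    (1 / 2 < H →
      Filter.Tendsto (fun T : ℝ => skewF H v σ₀ ρ T)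
        (nhdsWithin 0 (Set.Ioi 0)) (nhds 0)) := by
  obtain ⟨hH1, hH2⟩ := hH
  constructor
  · -- case H = 1/2
    intro hhalf
    subst hhalf
    have hev : ∀ᶠ T in nhdsWithin (0:ℝ) (Set.Ioi 0),
        Real.exp (-(v ^ 2 * T) / 8) * (v / 4)
          ≤ (∫ r in (0:ℝ)..T, ∫ u in r..T,
              (σ₀ * v * Real.sqrt (2 * (1/2)) / 2)
                * Real.exp (-(v ^ 2 * u ^ (2 * (1/2 : ℝ))) / 8)
                * (u - r) ^ ((1:ℝ)/2 - 1 / 2)) / (σ₀ * T ^ 2) ∧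
        (∫ r in (0:ℝ)..T, ∫ u in r..T,
              (σ₀ * v * Real.sqrt (2 * (1/2)) / 2)
                * Real.exp (-(v ^ 2 * u ^ (2 * (1/2 : ℝ))) / 8)
                * (u - r) ^ ((1:ℝ)/2 - 1 / 2)) / (σ₀ * T ^ 2) ≤ v / 4 := by
      filter_upwards [self_mem_nhdsWithin] with T hT
      exact myHalfBounds v σ₀ hv hσ₀ (hT : (0:ℝ) < T)
    have hlow : Tendsto (fun T : ℝ => Real.exp (-(v ^ 2 * T) / 8) * (v / 4))
        (nhdsWithin 0 (Set.Ioi 0)) (nhds (v / 4)) := by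
      have hc : Continuous fun T : ℝ => Real.exp (-(v ^ 2 * T) / 8) * (v / 4) := by
        fun_prop
      have h := (hc.tendsto 0).mono_left
        (nhdsWithin_le_nhds : nhdsWithin (0:ℝ) (Set.Ioi 0) ≤ nhds 0)
      simpa using h
    have hG : Tendsto (fun T : ℝ => (∫ r in (0:ℝ)..T, ∫ u in r..T,
          (σ₀ * v * Real.sqrt (2 * (1/2)) / 2)
            * Real.exp (-(v ^ 2 * u ^ (2 * (1/2 : ℝ))) / 8)
            * (u - r) ^ ((1:ℝ)/2 - 1 / 2)) / (σ₀ * T ^ 2))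
        (nhdsWithin 0 (Set.Ioi 0)) (nhds (v / 4)) :=
      tendsto_of_tendsto_of_tendsto_of_le_of_le' hlow tendsto_const_nhds
        (hev.mono fun T h => h.1) (hev.mono fun T h => h.2)
    have hfun : (fun T : ℝ => skewF (1/2) v σ₀ ρ T)
        = fun T : ℝ => ρ * ((∫ r in (0:ℝ)..T, ∫ u in r..T,
          (σ₀ * v * Real.sqrt (2 * (1/2)) / 2)
            * Real.exp (-(v ^ 2 * u ^ (2 * (1/2 : ℝ))) / 8)
            * (u - r) ^ ((1:ℝ)/2 - 1 / 2)) / (σ₀ * T ^ 2)) := by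
      funext T; simp only [skewF]; ring
    rw [hfun, show ρ * v / 4 = ρ * (v / 4) by ring]
    exact tendsto_const_nhds.mul hG
  · -- case H > 1/2
    intro hlt
    have hp : 0 < H - 1/2 := by linarith
    have hd1 : (0:ℝ) < H - 1/2 + 1 := by linarith
    have hd2 : (0:ℝ) < H - 1/2 + 2 := by linarith
    have hKnn : 0 ≤ v * Real.sqrt (2 * H) / (2 * (H - 1/2 + 1) * (H - 1/2 + 2)) := by
      apply div_nonneg (by positivity)
      nlinarith
    have hup : Tendsto (fun T : ℝ =>
        v * Real.sqrt (2 * H) / (2 * (H - 1/2 + 1) * (H - 1/2 + 2)) * T ^ (H - 1/2))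
        (nhdsWithin 0 (Set.Ioi 0)) (nhds 0) := by
      have h0 : Tendsto (fun T : ℝ => T ^ (H - 1/2)) (nhds 0) (nhds (0:ℝ)) := by
        have hc : Tendsto (fun T : ℝ => T ^ (H - 1/2)) (nhds 0)
            (nhds ((0:ℝ) ^ (H - 1/2))) :=
          Real.continuousAt_rpow_const 0 (H - 1/2) (Or.inr hp.le)
        rwa [Real.zero_rpow (ne_of_gt hp)] at hc
      have h := ((tendsto_const_nhds
          (x := v * Real.sqrt (2 * H) / (2 * (H - 1/2 + 1) * (H - 1/2 + 2)))
          (f := nhds (0:ℝ))).mul h0).mono_left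
        (nhdsWithin_le_nhds : nhdsWithin (0:ℝ) (Set.Ioi 0) ≤ nhds 0)
      simpa using h
    have hev : ∀ᶠ T in nhdsWithin (0:ℝ) (Set.Ioi 0),
        (0:ℝ) ≤ (∫ r in (0:ℝ)..T, ∫ u in r..T,
              (σ₀ * v * Real.sqrt (2 * H) / 2)
                * Real.exp (-(v ^ 2 * u ^ (2 * H)) / 8)
                * (u - r) ^ (H - 1 / 2)) / (σ₀ * T ^ 2) ∧
        (∫ r in (0:ℝ)..T, ∫ u in r..T,
              (σ₀ * v * Real.sqrt (2 * H) / 2)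
                * Real.exp (-(v ^ 2 * u ^ (2 * H)) / 8)
                * (u - r) ^ (H - 1 / 2)) / (σ₀ * T ^ 2)
          ≤ v * Real.sqrt (2 * H) / (2 * (H - 1/2 + 1) * (H - 1/2 + 2)) * T ^ (H - 1/2) := by
      filter_upwards [self_mem_nhdsWithin] with T hT
      have h := myGbounds H v σ₀ hH1 hv hσ₀ (hT : (0:ℝ) < T)
      refine ⟨le_trans ?_ h.1, h.2⟩
      have : (0:ℝ) ≤ T := le_of_lt hT
      exact mul_nonneg (Real.exp_pos _).le
        (mul_nonneg hKnn (Real.rpow_nonneg this _))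
    have hG : Tendsto (fun T : ℝ => (∫ r in (0:ℝ)..T, ∫ u in r..T,
          (σ₀ * v * Real.sqrt (2 * H) / 2)
            * Real.exp (-(v ^ 2 * u ^ (2 * H)) / 8)
            * (u - r) ^ (H - 1 / 2)) / (σ₀ * T ^ 2))
        (nhdsWithin 0 (Set.Ioi 0)) (nhds 0) :=
      tendsto_of_tendsto_of_tendsto_of_le_of_le' tendsto_const_nhds hup
        (hev.mono fun T h => h.1) (hev.mono fun T h => h.2)
    have hfun : (fun T : ℝ => skewF H v σ₀ ρ T)
        = fun T : ℝ => ρ * ((∫ r in (0:ℝ)..T, ∫ u in r..T,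
          (σ₀ * v * Real.sqrt (2 * H) / 2)
            * Real.exp (-(v ^ 2 * u ^ (2 * H)) / 8)
            * (u - r) ^ (H - 1 / 2)) / (σ₀ * T ^ 2)) := by
      funext T; simp only [skewF]; ring
    have hfin := (tendsto_const_nhds (x := ρ)
        (f := nhdsWithin (0:ℝ) (Set.Ioi 0))).mul hG
    rw [mul_zero] at hfin
    rw [hfun]
    exact hfin
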